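/- arXiv:1210.2883 — 2 statements merged into one kernel-verified Lean document; each statement's English description precedes it below -/
import Mathlib

section
/- Fix λ > 0 and let x be a BA fixed point. Let ψ : [0,∞) → [0,∞) be increasing and Lipschitz-continuous with ψ(0) = 0, and let y : [0,∞) → ℝ be twice continuously differentiable with y''(t) − y'(t) + ψ(y(t)) = 0, y(0) = 0 and y'(0) > 0. Define T = inf{t ≥ 0 : (y(t), y'(t)) ∉ [0,∞)²}, T₊ = inf{t ≥ 0 : y'(t) ≥ λ}, and T₋ = inf{t > 0 : y'(t) = φ_λ(y(t))}. Then: (i) if T₊ < T, T₊ < ∞, and φ_λ(s) ≤ ψ(s) for all s ≥ 0, then y'(0) ≥ x'(0); (ii) if T₋ < T, T₋ < ∞, and ψ(s) ≤ φ_λ(s) for all s ≥ 0, then x'(0) ≥ y'(0). -/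
open MeasureTheory ENNReal

/-- φ_λ(y) = λ(1 − e^{−y}). -/
noncomputable def baPhi (lam y : ℝ) : ℝ := lam * (1 - Real.exp (-y))

/-- A BA fixed point: x : [0,∞) → [0,∞) with x(0) = 0, subexponential decay
`e^{-as} x(s) → 0` for every a > 0, x not identically 0, and
x(t) = ∫₀ᵗ e^u (∫_u^∞ φ_λ(x(s)) e^{−s} ds) du for all t ≥ 0. -/
def IsBAFixedPoint (lam : ℝ) (x : ℝ → ℝ) : Prop :=
  (∀ t, 0 ≤ t → 0 ≤ x t) ∧
  x 0 = 0 ∧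
  (∀ a : ℝ, 0 < a →
    Filter.Tendsto (fun s => Real.exp (-(a * s)) * x s) Filter.atTop (nhds 0)) ∧
  (∃ t, 0 ≤ t ∧ x t ≠ 0) ∧
  (∀ t, 0 ≤ t →
    x t = ∫ u in (0:ℝ)..t, Real.exp u * ∫ s in Set.Ioi u, baPhi lam (x s) * Real.exp (-s))

/-- Infimum of a set of (nonnegative) reals as an extended nonnegative real;
the infimum of the empty set is +∞. -/
noncomputable def exitInf (S : Set ℝ) : ℝ≥0∞ :=
  ⨅ (t : S), ENNReal.ofReal (t : ℝ)


/-
Along a BA fixed point the speed `x'(t) = e^t ∫_t^∞ φ_λ(x(s)) e^{-s} ds` is positive and satisfies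
`x'' = x' - φ_λ(x)`, so `x` is an increasing bijection of `[0, ∞)` and `x' = F(x)` for a phase
curve `F` with `φ_λ < F < λ` and `F' = 1 - φ_λ / F`. Along `y` the gap `D = F(y) - y'` has
derivative `ψ(y) - φ_λ(y) y' / F(y)`, which is `≥ ψ(y) - φ_λ(y)` while `D > 0` and
`≤ ψ(y) - φ_λ(y)` while `D < 0`. So if `φ_λ ≤ ψ` and `y'(0) < x'(0) = F(0)`, then `y'` stays below
`F(y) < λ` as long as `(y, y')` is in the quadrant, and never reaches `λ`; if `ψ ≤ φ_λ` and
`y'(0) > F(0)`, then `y'` stays above `F(y) > φ_λ(y)`, and never meets `φ_λ(y)`.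
-/

open Set Filter Topology

theorem setIntegral_lt_setIntegral_of_forall_lt {X : Type*} [MeasurableSpace X] {μ : Measure X}
    {s : Set X} (hs : MeasurableSet s) (hμs : μ s ≠ 0) {f g : X → ℝ} (hf : IntegrableOn f s μ)
    (hg : IntegrableOn g s μ) (hlt : ∀ x ∈ s, f x < g x) :
    ∫ x in s, f x ∂μ < ∫ x in s, g x ∂μ := by
  have hpos : 0 < ∫ x in s, (g x - f x) ∂μ := by
    rw [setIntegral_pos_iff_support_of_nonneg_ae
      ((ae_restrict_iff' hs).2 (.of_forall fun x hx => sub_nonneg.2 (hlt x hx).le)) (hg.sub hf),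
      inter_eq_right.2 fun x hx => Function.mem_support.2 (sub_ne_zero.2 (hlt x hx).ne')]
    exact pos_iff_ne_zero.2 hμs
  rw [integral_sub hg hf] at hpos
  linarith

theorem aestronglyMeasurable_Ioi_of_forall_lt {β : Type*} [TopologicalSpace β]
    [TopologicalSpace.PseudoMetrizableSpace β] {μ : Measure ℝ} {f : ℝ → β} {u : ℝ}
    (h : ∀ v, u < v → AEStronglyMeasurable f (μ.restrict (Ioi v))) :
    AEStronglyMeasurable f (μ.restrict (Ioi u)) := by
  have hunion : Ioi u = ⋃ n : ℕ, Ioi (u + 1 / (n + 1)) := by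
    ext s
    simp only [mem_Ioi, mem_iUnion]
    refine ⟨fun hs => ?_, fun ⟨n, hn⟩ => lt_of_le_of_lt (by simp; positivity) hn⟩
    obtain ⟨n, hn⟩ := exists_nat_one_div_lt (sub_pos.2 hs)
    exact ⟨n, by linarith⟩
  rw [hunion, aestronglyMeasurable_iUnion_iff]
  exact fun n => h _ (by simp; positivity)

theorem exp_mul_integral_Ioi_const_mul_exp_neg (c t : ℝ) :
    Real.exp t * ∫ s in Ioi t, c * Real.exp (-s) = c := by
  rw [integral_const_mul, integral_exp_neg_Ioi, mul_left_comm, ← Real.exp_add, add_neg_cancel,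
    Real.exp_zero, mul_one]

theorem pos_of_hasDerivAt_nonneg_of_pos {D D' : ℝ → ℝ} {a b : ℝ} (hD : ContinuousOn D (Icc a b))
    (ha : 0 < D a) (hD' : ∀ t ∈ Ioo a b, 0 < D t → HasDerivAt D (D' t) t ∧ 0 ≤ D' t) :
    ∀ t ∈ Icc a b, 0 < D t := by
  by_contra! h
  set B := Icc a b ∩ D ⁻¹' Iic 0
  have hbdd : BddBelow B := ⟨a, fun s hs => hs.1.1⟩
  obtain ⟨⟨has, hsb⟩, hDs⟩ : sInf B ∈ B :=
    (hD.preimage_isClosed_of_isClosed isClosed_Icc isClosed_Iic).csInf_mem h hbdd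
  set s := sInf B
  -- `s` is the first point where `D ≤ 0`; before it `D > 0`, so `D` increases on `[a, s]`
  have hbefore : ∀ u ∈ Ioo a s, u ∈ Ioo a b ∧ 0 < D u := fun u hu =>
    ⟨⟨hu.1, hu.2.trans_le hsb⟩, lt_of_not_ge fun hDu =>
      (csInf_le hbdd ⟨⟨hu.1.le, hu.2.le.trans hsb⟩, hDu⟩).not_gt hu.2⟩
  have hmono : MonotoneOn D (Icc a s) := by
    refine monotoneOn_of_hasDerivWithinAt_nonneg (f' := D') (convex_Icc a s)
      (hD.mono (Icc_subset_Icc_right hsb)) (fun u hu => ?_) (fun u hu => ?_) <;>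
      rw [interior_Icc] at hu
    · exact (hD' u (hbefore u hu).1 (hbefore u hu).2).1.hasDerivWithinAt
    · exact (hD' u (hbefore u hu).1 (hbefore u hu).2).2
  exact absurd hDs (not_le.2 (ha.trans_le (hmono (left_mem_Icc.2 has) (right_mem_Icc.2 has) has)))

theorem ContDiffOn.hasDerivAt_derivWithin_Ici {f : ℝ → ℝ} {n : WithTop ℕ∞} {a t : ℝ}
    (hf : ContDiffOn ℝ n f (Ici a)) (hn : n ≠ 0) (ht : a < t) :
    HasDerivAt f (derivWithin f (Ici a) t) t := by
  rw [derivWithin_of_mem_nhds (Ici_mem_nhds ht)]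
  exact ((hf.differentiableOn hn t ht.le).differentiableAt (Ici_mem_nhds ht)).hasDerivAt

theorem nonempty_of_exitInf_lt_top {S : Set ℝ} (h : exitInf S < ⊤) : S.Nonempty := by
  by_contra hS
  rw [not_nonempty_iff_eq_empty] at hS
  subst hS
  simp [exitInf] at h

theorem exitInf_le {S : Set ℝ} {t : ℝ} (ht : t ∈ S) : exitInf S ≤ ENNReal.ofReal t :=
  iInf_le (fun s : S => ENNReal.ofReal s) ⟨t, ht⟩

theorem exists_mem_forall_Icc_notMem_of_exitInf_lt {A B C : Set ℝ} (hA : A ⊆ Ici 0)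
    (hAC : A ⊆ C) (hC : IsClosed C) (hfin : exitInf A < ⊤) (hlt : exitInf A < exitInf B) :
    ∃ r ∈ C, 0 ≤ r ∧ ∀ t ∈ Icc 0 r, t ∉ B := by
  have hne := nonempty_of_exitInf_lt_top hfin
  have hbdd : BddBelow A := ⟨0, hA⟩
  refine ⟨sInf A, hC.closure_subset_iff.2 hAC (csInf_mem_closure hne hbdd), le_csInf hne hA,
    fun t ht htB => hlt.not_ge ((exitInf_le htB).trans ((ENNReal.ofReal_le_ofReal ht.2).trans ?_))⟩
  exact le_iInf fun s => ENNReal.ofReal_le_ofReal (csInf_le hbdd s.2)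

theorem baPhi_zero (lam : ℝ) : baPhi lam 0 = 0 := by simp [baPhi]

theorem continuous_baPhi (lam : ℝ) : Continuous (baPhi lam) := by
  unfold baPhi; fun_prop

theorem baPhi_strictMono {lam : ℝ} (hlam : 0 < lam) : StrictMono (baPhi lam) := fun _ _ hab =>
  mul_lt_mul_of_pos_left (by gcongr) hlam

theorem baPhi_pos {lam v : ℝ} (hlam : 0 < lam) (hv : 0 < v) : 0 < baPhi lam v :=
  baPhi_zero lam ▸ baPhi_strictMono hlam hv

theorem baPhi_nonneg {lam v : ℝ} (hlam : 0 ≤ lam) (hv : 0 ≤ v) : 0 ≤ baPhi lam v :=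
  mul_nonneg hlam (sub_nonneg.2 (Real.exp_le_one_iff.2 (neg_nonpos.2 hv)))

theorem baPhi_lt {lam : ℝ} (hlam : 0 < lam) (v : ℝ) : baPhi lam v < lam := by
  have := Real.exp_pos (-v)
  unfold baPhi
  nlinarith

noncomputable def baIntegrand (lam : ℝ) (x : ℝ → ℝ) (s : ℝ) : ℝ :=
  baPhi lam (x s) * Real.exp (-s)

noncomputable def baSpeed (lam : ℝ) (x : ℝ → ℝ) (t : ℝ) : ℝ :=
  Real.exp t * ∫ s in Ioi t, baIntegrand lam x s

/-- Agrees with a fixed point `x` on `[0, ∞)` and is linear of slope `x'(0)` on `(-∞, 0]`, so that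
it is a strictly monotone bijection of `ℝ`, whose inverse parametrises the phase curve. -/
noncomputable def baPath (lam : ℝ) (x : ℝ → ℝ) (t : ℝ) : ℝ :=
  ∫ u in 0..t, baSpeed lam x (max u 0)

/-- Along a fixed point `x' = F(x)`; then `x'' = x' - φ_λ(x)` becomes `F' = 1 - φ_λ / F`. -/
structure IsBAPhaseCurve (lam : ℝ) (F : ℝ → ℝ) : Prop where
  continuous : Continuous F
  lt_lam : ∀ z, 0 ≤ z → F z < lam
  baPhi_lt : ∀ z, 0 ≤ z → baPhi lam z < F z
  hasDerivAt : ∀ z, 0 < z → HasDerivAt F (1 - baPhi lam z / F z) z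

theorem IsBAPhaseCurve.pos {lam : ℝ} {F : ℝ → ℝ} (hF : IsBAPhaseCurve lam F) (hlam : 0 ≤ lam)
    {z : ℝ} (hz : 0 ≤ z) : 0 < F z :=
  (baPhi_nonneg hlam hz).trans_lt (hF.baPhi_lt z hz)

namespace IsBAFixedPoint

variable {lam : ℝ} {x : ℝ → ℝ}

theorem integrand_nonneg (hx : IsBAFixedPoint lam x) (hlam : 0 ≤ lam) {s : ℝ} (hs : 0 ≤ s) :
    0 ≤ baIntegrand lam x s :=
  mul_nonneg (baPhi_nonneg hlam (hx.1 s hs)) (Real.exp_pos _).le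

theorem eq_zero_of_integral_Ioi_eq_zero (hx : IsBAFixedPoint lam x) {a : ℝ}
    (h : ∀ v ∈ Ico 0 a, ∫ s in Ioi v, baIntegrand lam x s = 0) {t : ℝ} (ht : t ∈ Icc 0 a) :
    x t = 0 := by
  obtain ⟨-, -, -, -, hfix⟩ := hx
  rw [hfix t ht.1, intervalIntegral.integral_of_le ht.1, integral_Ioc_eq_integral_Ioo]
  refine setIntegral_eq_zero_of_forall_eq_zero fun u hu => ?_
  change Real.exp u * ∫ s in Ioi u, baIntegrand lam x s = 0
  rw [h u ⟨hu.1.le, hu.2.trans_le ht.2⟩, mul_zero]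

theorem integrableOn_integrand_of_forall_lt (hx : IsBAFixedPoint lam x) (hlam : 0 < lam) {u : ℝ}
    (hu : 0 ≤ u) (h : ∀ v, u < v → IntegrableOn (baIntegrand lam x) (Ioi v)) :
    IntegrableOn (baIntegrand lam x) (Ioi u) := by
  refine ((integrableOn_exp_neg_Ioi u).const_mul lam).mono'
    (aestronglyMeasurable_Ioi_of_forall_lt fun v hv => (h v hv).aestronglyMeasurable)
    ((ae_restrict_iff' measurableSet_Ioi).2 (.of_forall fun s hs => ?_))
  have hs0 : 0 ≤ s := hu.trans (le_of_lt hs)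
  rw [Real.norm_eq_abs, abs_of_nonneg (hx.integrand_nonneg hlam.le hs0)]
  exact mul_le_mul_of_nonneg_right (baPhi_lt hlam _).le (Real.exp_pos _).le

theorem integrableOn_integrand (hx : IsBAFixedPoint lam x) (hlam : 0 < lam) :
    IntegrableOn (baIntegrand lam x) (Ioi 0) := by
  set S := {v | IntegrableOn (baIntegrand lam x) (Ioi v)}
  have hup : ∀ v ∈ S, ∀ w, v ≤ w → w ∈ S := fun v hv w hvw => hv.mono_set (Ioi_subset_Ioi hvw)
  by_contra h0
  have hS0 : ∀ v ∈ S, 0 ≤ v := fun v hv => le_of_not_ge fun hv0 => h0 (hup v hv 0 hv0)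
  obtain ⟨t₀, ht₀, hxt₀⟩ := hx.2.2.2.1
  -- below `sInf S` the tail integrals take the junk value `0`, which forces `x = 0` there
  rcases S.eq_empty_or_nonempty with hS | hS
  · refine hxt₀ (hx.eq_zero_of_integral_Ioi_eq_zero (fun v _ => integral_undef fun hv => ?_)
      ⟨ht₀, le_rfl⟩)
    exact hS.subset hv
  set u₀ := sInf S
  have hbdd : BddBelow S := ⟨0, hS0⟩
  have hu₀ : 0 ≤ u₀ := le_csInf hS hS0
  have hu₀S : u₀ ∈ S := hx.integrableOn_integrand_of_forall_lt hlam hu₀ fun v hv =>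
    let ⟨w, hwS, hwv⟩ := exists_lt_of_csInf_lt hS hv
    hup w hwS v hwv.le
  have hzero : ∀ t ∈ Icc 0 u₀, x t = 0 := fun t ht =>
    hx.eq_zero_of_integral_Ioi_eq_zero (fun v hv => integral_undef fun hvS =>
      (csInf_le hbdd hvS).not_gt hv.2) ht
  refine h0 ((Ioc_union_Ioi_eq_Ioi hu₀) ▸ IntegrableOn.union ?_ hu₀S)
  refine integrableOn_zero.congr_fun (fun s hs => ?_) measurableSet_Ioc
  simp [baIntegrand, hzero s ⟨hs.1.le, hs.2⟩, baPhi_zero]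

theorem integrableOn_integrand_Ioi (hx : IsBAFixedPoint lam x) (hlam : 0 < lam) {u : ℝ}
    (hu : 0 ≤ u) : IntegrableOn (baIntegrand lam x) (Ioi u) :=
  (hx.integrableOn_integrand hlam).mono_set (Ioi_subset_Ioi hu)

theorem baSpeed_nonneg (hx : IsBAFixedPoint lam x) (hlam : 0 < lam) {t : ℝ} (ht : 0 ≤ t) :
    0 ≤ baSpeed lam x t :=
  mul_nonneg (Real.exp_pos t).le (setIntegral_nonneg measurableSet_Ioi fun _ hs =>
    hx.integrand_nonneg hlam.le (ht.trans (le_of_lt hs)))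

theorem continuous_baSpeed_max (hx : IsBAFixedPoint lam x) (hlam : 0 < lam) :
    Continuous fun t => baSpeed lam x (max t 0) :=
  (Real.continuous_exp.continuousOn.mul
    (hx.integrableOn_integrand hlam).continuousOn_Ici_primitive_Ioi).comp_continuous
    (continuous_id.max continuous_const) fun t => le_max_right t 0

theorem hasDerivAt_baPath (hx : IsBAFixedPoint lam x) (hlam : 0 < lam) (t : ℝ) :
    HasDerivAt (baPath lam x) (baSpeed lam x (max t 0)) t :=
  ((hx.continuous_baSpeed_max hlam).integral_hasStrictDerivAt 0 t).hasDerivAt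

theorem continuous_baPath (hx : IsBAFixedPoint lam x) (hlam : 0 < lam) :
    Continuous (baPath lam x) :=
  continuous_iff_continuousAt.2 fun t => (hx.hasDerivAt_baPath hlam t).continuousAt

theorem eqOn_baPath (hx : IsBAFixedPoint lam x) : EqOn x (baPath lam x) (Ici 0) := fun t ht => by
  obtain ⟨-, -, -, -, hfix⟩ := hx
  rw [hfix t ht, baPath]
  refine intervalIntegral.integral_congr fun u hu => ?_
  rw [uIcc_of_le ht] at hu
  rw [max_eq_left hu.1]
  rfl

theorem baPath_monotone (hx : IsBAFixedPoint lam x) (hlam : 0 < lam) : Monotone (baPath lam x) :=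
  monotone_of_hasDerivAt_nonneg (hx.hasDerivAt_baPath hlam) fun t =>
    hx.baSpeed_nonneg hlam (le_max_right t 0)

theorem monotoneOn (hx : IsBAFixedPoint lam x) (hlam : 0 < lam) : MonotoneOn x (Ici 0) :=
  fun s hs t ht hst => by
    rw [hx.eqOn_baPath hs, hx.eqOn_baPath ht]
    exact hx.baPath_monotone hlam hst

theorem integral_integrand_pos (hx : IsBAFixedPoint lam x) (hlam : 0 < lam) {t : ℝ}
    (ht : 0 ≤ t) : 0 < ∫ s in Ioi t, baIntegrand lam x s := by
  obtain ⟨t₀, ht₀, hxt₀⟩ := hx.2.2.2.1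
  set m := max t t₀
  have hpos : ∀ s ∈ Ioi m, 0 < baIntegrand lam x s := fun s hs => by
    have ht₀s : t₀ ≤ s := (le_max_right t t₀).trans hs.le
    have hxs : x t₀ ≤ x s := hx.monotoneOn hlam ht₀ (ht₀.trans ht₀s) ht₀s
    exact mul_pos (baPhi_pos hlam ((lt_of_le_of_ne (hx.1 t₀ ht₀) hxt₀.symm).trans_le hxs))
      (Real.exp_pos _)
  calc (0 : ℝ) = ∫ _ in Ioi m, (0 : ℝ) := by simp
    _ < ∫ s in Ioi m, baIntegrand lam x s :=
      setIntegral_lt_setIntegral_of_forall_lt (f := fun _ => 0) measurableSet_Ioi (by simp)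
        integrableOn_zero (hx.integrableOn_integrand_Ioi hlam (ht.trans (le_max_left t t₀))) hpos
    _ ≤ ∫ s in Ioi t, baIntegrand lam x s :=
      setIntegral_mono_set (hx.integrableOn_integrand_Ioi hlam ht)
        ((ae_restrict_iff' measurableSet_Ioi).2 (.of_forall fun s hs =>
          hx.integrand_nonneg hlam.le (ht.trans (le_of_lt hs))))
        (Ioi_subset_Ioi (le_max_left t t₀)).eventuallyLE

theorem baSpeed_pos (hx : IsBAFixedPoint lam x) (hlam : 0 < lam) {t : ℝ} (ht : 0 ≤ t) :
    0 < baSpeed lam x t :=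
  mul_pos (Real.exp_pos t) (hx.integral_integrand_pos hlam ht)

theorem baPath_strictMono (hx : IsBAFixedPoint lam x) (hlam : 0 < lam) :
    StrictMono (baPath lam x) :=
  strictMono_of_hasDerivAt_pos (hx.hasDerivAt_baPath hlam) fun t =>
    hx.baSpeed_pos hlam (le_max_right t 0)

theorem baSpeed_lt (hx : IsBAFixedPoint lam x) (hlam : 0 < lam) {t : ℝ} (ht : 0 ≤ t) :
    baSpeed lam x t < lam := by
  conv_rhs => rw [← exp_mul_integral_Ioi_const_mul_exp_neg lam t]
  exact mul_lt_mul_of_pos_left (setIntegral_lt_setIntegral_of_forall_lt measurableSet_Ioi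
    (by simp) (hx.integrableOn_integrand_Ioi hlam ht) ((integrableOn_exp_neg_Ioi t).const_mul lam)
    fun s _ => mul_lt_mul_of_pos_right (baPhi_lt hlam (x s)) (Real.exp_pos (-s)))
    (Real.exp_pos t)

theorem baPhi_lt_baSpeed (hx : IsBAFixedPoint lam x) (hlam : 0 < lam) {t : ℝ} (ht : 0 ≤ t) :
    baPhi lam (x t) < baSpeed lam x t := by
  conv_lhs => rw [← exp_mul_integral_Ioi_const_mul_exp_neg (baPhi lam (x t)) t]
  refine mul_lt_mul_of_pos_left (setIntegral_lt_setIntegral_of_forall_lt measurableSet_Ioi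
    (by simp) ((integrableOn_exp_neg_Ioi t).const_mul _) (hx.integrableOn_integrand_Ioi hlam ht)
    fun s hs => ?_) (Real.exp_pos t)
  have hxts : x t < x s := by
    rw [hx.eqOn_baPath ht, hx.eqOn_baPath (ht.trans (le_of_lt hs))]
    exact hx.baPath_strictMono hlam hs
  exact mul_lt_mul_of_pos_right (baPhi_strictMono hlam hxts) (Real.exp_pos (-s))

theorem hasDerivAt_baSpeed (hx : IsBAFixedPoint lam x) (hlam : 0 < lam) {t : ℝ} (ht : 0 < t) :
    HasDerivAt (baSpeed lam x) (baSpeed lam x t - baPhi lam (x t)) t := by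
  have hint := hx.integrableOn_integrand hlam
  have hcont : ContinuousOn (baIntegrand lam x) (Ioi 0) := by
    refine (((continuous_baPhi lam).comp (hx.continuous_baPath hlam)).mul
      (Real.continuous_exp.comp continuous_neg)).continuousOn.congr fun s hs => ?_
    simp [baIntegrand, hx.eqOn_baPath (Ioi_subset_Ici_self hs)]
  have hprim : HasDerivAt (fun s => ∫ u in 0..s, baIntegrand lam x u) (baIntegrand lam x t) t :=
    intervalIntegral.integral_hasDerivAt_right
      ((intervalIntegrable_iff_integrableOn_Ioc_of_le ht.le).2 (hint.mono_set Ioc_subset_Ioi_self))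
      (hcont.stronglyMeasurableAtFilter isOpen_Ioi t ht) (hcont.continuousAt (Ioi_mem_nhds ht))
  have htail : HasDerivAt (fun s => ∫ u in Ioi s, baIntegrand lam x u)
      (-baIntegrand lam x t) t := by
    refine ((hasDerivAt_const t (∫ u in Ioi 0, baIntegrand lam x u)).sub hprim
      |>.congr_deriv (zero_sub _)).congr_of_eventuallyEq ?_
    filter_upwards [Ioi_mem_nhds ht] with s hs
    rw [Pi.sub_apply, ← intervalIntegral.integral_Ioi_sub_Ioi hint (le_of_lt hs),
      _root_.sub_sub_cancel]
  have hexp : Real.exp t * Real.exp (-t) = 1 := by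
    rw [← Real.exp_add, add_neg_cancel, Real.exp_zero]
  refine ((Real.hasDerivAt_exp t).mul htail).congr_deriv ?_
  rw [baSpeed, baIntegrand]
  linear_combination (-baPhi lam (x t)) * hexp

theorem baPath_zero : baPath lam x 0 = 0 := intervalIntegral.integral_same

theorem baPath_surjective (hx : IsBAFixedPoint lam x) (hlam : 0 < lam) :
    Function.Surjective (baPath lam x) := by
  refine (hx.continuous_baPath hlam).surjective ?_ ?_
  · -- beyond `t = 1` the speed stays above `c = φ_λ(x 1) > 0`
    set c := baPhi lam (x 1)
    have hc : 0 < c := baPhi_pos hlam <| by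
      rw [hx.eqOn_baPath (mem_Ici.2 zero_le_one), ← baPath_zero (lam := lam) (x := x)]
      exact hx.baPath_strictMono hlam zero_lt_one
    have hgrowth : ∀ t ∈ Ici (1 : ℝ), c * (t - 1) ≤ baPath lam x t - baPath lam x 1 := by
      refine fun t ht => (convex_Ici 1).mul_sub_le_image_sub_of_le_deriv
        (hx.continuous_baPath hlam).continuousOn
        (fun u _ => (hx.hasDerivAt_baPath hlam u).differentiableAt.differentiableWithinAt)
        (fun u hu => ?_) 1 self_mem_Ici t ht ht
      rw [interior_Ici] at hu
      have hu0 : (0 : ℝ) ≤ u := zero_le_one.trans (le_of_lt hu)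
      rw [(hx.hasDerivAt_baPath hlam u).deriv, max_eq_left hu0]
      exact (baPhi_strictMono hlam).monotone
        (hx.monotoneOn hlam (mem_Ici.2 zero_le_one) (mem_Ici.2 hu0) (le_of_lt hu))
        |>.trans (hx.baPhi_lt_baSpeed hlam hu0).le
    refine tendsto_atTop_mono' _ ?_ (tendsto_atTop_add_const_left _ (baPath lam x 1)
      ((tendsto_atTop_add_const_right _ (-1) tendsto_id).const_mul_atTop hc))
    filter_upwards [eventually_ge_atTop 1] with t ht
    have := hgrowth t ht
    simp only [id]
    linarith
  · refine (tendsto_id.atBot_mul_const (hx.baSpeed_pos hlam le_rfl)).congr' ?_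
    filter_upwards [eventually_le_atBot 0] with t ht
    rw [baPath, intervalIntegral.integral_congr (g := fun _ => baSpeed lam x 0) fun u hu => by
      rw [uIcc_of_ge ht] at hu
      rw [max_eq_right hu.2], intervalIntegral.integral_const, smul_eq_mul, sub_zero, id]

theorem derivWithin_zero (hx : IsBAFixedPoint lam x) (hlam : 0 < lam) :
    derivWithin x (Ici 0) 0 = baSpeed lam x 0 := by
  have h := ((hx.hasDerivAt_baPath hlam 0).hasDerivWithinAt (s := Ici 0)).congr hx.eqOn_baPath
    (hx.eqOn_baPath self_mem_Ici)
  rw [max_self] at h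
  exact h.derivWithin (uniqueDiffOn_Ici 0 0 self_mem_Ici)

theorem exists_phaseCurve (hx : IsBAFixedPoint lam x) (hlam : 0 < lam) :
    ∃ F, IsBAPhaseCurve lam F ∧ F 0 = derivWithin x (Ici 0) 0 := by
  set e := StrictMono.orderIsoOfSurjective _ (hx.baPath_strictMono hlam)
    (hx.baPath_surjective hlam)
  have hpath : ∀ z, baPath lam x (e.symm z) = z := e.apply_symm_apply
  have hsymm_zero : e.symm 0 = 0 := e.symm_apply_eq.2 baPath_zero.symm
  have hsymm_nonneg : ∀ z, 0 ≤ z → 0 ≤ e.symm z := fun z hz => hsymm_zero ▸ e.symm.monotone hz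
  have hsymm_pos : ∀ z, 0 < z → 0 < e.symm z := fun z hz => hsymm_zero ▸ e.symm.strictMono hz
  have hx_symm : ∀ z, 0 ≤ z → x (e.symm z) = z := fun z hz => by
    rw [hx.eqOn_baPath (hsymm_nonneg z hz), hpath]
  refine ⟨fun z => baSpeed lam x (max (e.symm z) 0), ⟨?_, fun z hz => ?_, fun z hz => ?_,
    fun z hz => ?_⟩, ?_⟩
  · exact (hx.continuous_baSpeed_max hlam).comp e.symm.continuous
  · exact hx.baSpeed_lt hlam (le_max_right _ _)
  · have h := hx.baPhi_lt_baSpeed hlam (hsymm_nonneg z hz)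
    rwa [hx_symm z hz, ← max_eq_left (hsymm_nonneg z hz)] at h
  · have ht := hsymm_pos z hz
    have hxt := hx_symm z hz.le
    set t := e.symm z
    have hspeed : HasDerivAt (fun s => baSpeed lam x (max s 0))
        (baSpeed lam x t - baPhi lam (x t)) t := by
      refine (hx.hasDerivAt_baSpeed hlam ht).congr_of_eventuallyEq ?_
      filter_upwards [Ioi_mem_nhds ht] with s hs
      rw [max_eq_left (le_of_lt hs)]
    have hinv : HasDerivAt e.symm (baSpeed lam x (max t 0))⁻¹ z :=
      .of_local_left_inverse e.symm.continuous.continuousAt (hx.hasDerivAt_baPath hlam t)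
        (hx.baSpeed_pos hlam (le_max_right _ _)).ne' (.of_forall hpath)
    refine (hspeed.comp z hinv).congr_deriv ?_
    have hspeed_ne : baSpeed lam x t ≠ 0 := (hx.baSpeed_pos hlam ht.le).ne'
    rw [max_eq_left ht.le, hxt]
    field_simp
  · simp [hsymm_zero, hx.derivWithin_zero hlam]

end IsBAFixedPoint

structure IsODESolution (ψ y y' : ℝ → ℝ) : Prop where
  continuousOn : ContinuousOn y (Ici 0)
  continuousOn_deriv : ContinuousOn y' (Ici 0)
  hasDerivAt : ∀ t, 0 < t → HasDerivAt y (y' t) t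
  hasDerivAt_deriv : ∀ t, 0 < t → HasDerivAt y' (y' t - ψ (y t)) t

namespace IsODESolution

variable {lam r : ℝ} {F ψ y y' : ℝ → ℝ}

theorem of_contDiffOn (hy : ContDiffOn ℝ 2 y (Ici 0))
    (hode : ∀ t, 0 ≤ t → derivWithin (derivWithin y (Ici 0)) (Ici 0) t
      - derivWithin y (Ici 0) t + ψ (y t) = 0) :
    IsODESolution ψ y (derivWithin y (Ici 0)) where
  continuousOn := hy.continuousOn
  continuousOn_deriv := hy.continuousOn_derivWithin (uniqueDiffOn_Ici 0) (by norm_num)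
  hasDerivAt _ ht := hy.hasDerivAt_derivWithin_Ici two_ne_zero ht
  hasDerivAt_deriv t ht := by
    refine ((hy.derivWithin (uniqueDiffOn_Ici 0) (m := 1) (by norm_num)).hasDerivAt_derivWithin_Ici
      one_ne_zero ht).congr_deriv ?_
    linarith [hode t ht.le]

theorem pos_of_deriv_nonneg (hy : IsODESolution ψ y y') (hy0 : y 0 = 0) (hy'0 : 0 < y' 0)
    (hr : ∀ t ∈ Icc 0 r, 0 ≤ y' t) : ∀ t ∈ Ioc 0 r, 0 < y t := by
  intro t ht
  obtain ⟨u, hu, hpos⟩ : ∃ u > 0, Ico 0 u ⊆ {s | 0 < y' s} :=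
    mem_nhdsGE_iff_exists_Ico_subset.1 ((hy.continuousOn_deriv 0 self_mem_Ici).eventually
      (lt_mem_nhds hy'0))
  set m := min t u
  have hm : 0 < m := lt_min ht.1 hu
  have hstrict : StrictMonoOn y (Icc 0 m) := by
    refine strictMonoOn_of_hasDerivWithinAt_pos (f' := y') (convex_Icc 0 m)
      (hy.continuousOn.mono Icc_subset_Ici_self) (fun s hs => ?_) (fun s hs => ?_) <;>
      rw [interior_Icc] at hs
    · exact (hy.hasDerivAt s hs.1).hasDerivWithinAt
    · exact hpos ⟨hs.1.le, hs.2.trans_le (min_le_right t u)⟩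
  have hmono : MonotoneOn y (Icc 0 r) := by
    refine monotoneOn_of_hasDerivWithinAt_nonneg (f' := y') (convex_Icc 0 r)
      (hy.continuousOn.mono Icc_subset_Ici_self) (fun s hs => ?_) (fun s hs => ?_) <;>
      rw [interior_Icc] at hs
    · exact (hy.hasDerivAt s hs.1).hasDerivWithinAt
    · exact hr s (Ioo_subset_Icc_self hs)
  calc 0 = y 0 := hy0.symm
    _ < y m := hstrict (left_mem_Icc.2 hm.le) (right_mem_Icc.2 hm.le) hm
    _ ≤ y t := hmono ⟨hm.le, (min_le_left t u).trans ht.2⟩ (Ioc_subset_Icc_self ht)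
      (min_le_left t u)

theorem hasDerivAt_phaseCurve_comp_sub (hy : IsODESolution ψ y y') (hF : IsBAPhaseCurve lam F)
    {t : ℝ} (ht : 0 < t) (hyt : 0 < y t) :
    HasDerivAt (fun s => F (y s) - y' s) (ψ (y t) - baPhi lam (y t) / F (y t) * y' t) t :=
  (((hF.hasDerivAt _ hyt).comp t (hy.hasDerivAt t ht)).sub (hy.hasDerivAt_deriv t ht)).congr_deriv
    (by ring)

theorem lt_phaseCurve (hy : IsODESolution ψ y y') (hF : IsBAPhaseCurve lam F) (hlam : 0 ≤ lam)
    (hψ : ∀ s, 0 ≤ s → baPhi lam s ≤ ψ s) (hy0 : y 0 = 0) (hy'0 : 0 < y' 0) (h0 : y' 0 < F 0)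
    (hr : ∀ t ∈ Icc 0 r, 0 ≤ y' t) : ∀ t ∈ Icc 0 r, y' t < F (y t) := by
  have hc : ContinuousOn (fun s => F (y s) - y' s) (Icc 0 r) :=
    ((hF.continuous.comp_continuousOn hy.continuousOn).sub hy.continuousOn_deriv).mono
      Icc_subset_Ici_self
  refine fun t ht => sub_pos.1 (pos_of_hasDerivAt_nonneg_of_pos
    (D' := fun s => ψ (y s) - baPhi lam (y s) / F (y s) * y' s) hc (by rwa [hy0, sub_pos])
    (fun s hs hgap => ?_) t ht)
  have hys := hy.pos_of_deriv_nonneg hy0 hy'0 hr s (Ioo_subset_Ioc_self hs)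
  refine ⟨hy.hasDerivAt_phaseCurve_comp_sub hF hs.1 hys, ?_⟩
  -- below the phase curve, `φ_λ(y) y' / F(y) ≤ φ_λ(y) ≤ ψ(y)`
  have hratio : baPhi lam (y s) / F (y s) * y' s ≤ baPhi lam (y s) := by
    rw [div_mul_eq_mul_div, div_le_iff₀ (hF.pos hlam hys.le)]
    exact mul_le_mul_of_nonneg_left (by linarith) (baPhi_nonneg hlam hys.le)
  linarith [hψ _ hys.le]

theorem phaseCurve_lt (hy : IsODESolution ψ y y') (hF : IsBAPhaseCurve lam F) (hlam : 0 ≤ lam)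
    (hψ : ∀ s, 0 ≤ s → ψ s ≤ baPhi lam s) (hy0 : y 0 = 0) (hy'0 : 0 < y' 0) (h0 : F 0 < y' 0)
    (hr : ∀ t ∈ Icc 0 r, 0 ≤ y' t) : ∀ t ∈ Icc 0 r, F (y t) < y' t := by
  have hc : ContinuousOn (fun s => -(F (y s) - y' s)) (Icc 0 r) :=
    ((hF.continuous.comp_continuousOn hy.continuousOn).sub hy.continuousOn_deriv).neg.mono
      Icc_subset_Ici_self
  refine fun t ht => sub_neg.1 (neg_pos.1 (pos_of_hasDerivAt_nonneg_of_pos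
    (D' := fun s => -(ψ (y s) - baPhi lam (y s) / F (y s) * y' s)) hc
    (by rwa [hy0, neg_pos, sub_neg]) (fun s hs hgap => ?_) t ht))
  have hys := hy.pos_of_deriv_nonneg hy0 hy'0 hr s (Ioo_subset_Ioc_self hs)
  refine ⟨(hy.hasDerivAt_phaseCurve_comp_sub hF hs.1 hys).neg, ?_⟩
  -- above the phase curve, `φ_λ(y) y' / F(y) ≥ φ_λ(y) ≥ ψ(y)`
  have hratio : baPhi lam (y s) ≤ baPhi lam (y s) / F (y s) * y' s := by
    rw [div_mul_eq_mul_div, le_div_iff₀ (hF.pos hlam hys.le)]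
    exact mul_le_mul_of_nonneg_left (by linarith) (baPhi_nonneg hlam hys.le)
  linarith [hψ _ hys.le]

end IsODESolution

theorem ba_comparison_general {lam : ℝ} (hlam : 0 < lam) {x : ℝ → ℝ}
    (hx : IsBAFixedPoint lam x)
    (ψ : ℝ → ℝ)
    (y : ℝ → ℝ) (hyreg : ContDiffOn ℝ 2 y (Set.Ici 0))
    (hyode : ∀ t, 0 ≤ t →
      derivWithin (derivWithin y (Set.Ici 0)) (Set.Ici 0) t
        - derivWithin y (Set.Ici 0) t + ψ (y t) = 0)
    (hy0 : y 0 = 0) (hy'0 : 0 < derivWithin y (Set.Ici 0) 0) :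
    (exitInf {t : ℝ | 0 ≤ t ∧ lam ≤ derivWithin y (Set.Ici 0) t}
        < exitInf {t : ℝ | 0 ≤ t ∧ ¬(0 ≤ y t ∧ 0 ≤ derivWithin y (Set.Ici 0) t)} →
      exitInf {t : ℝ | 0 ≤ t ∧ lam ≤ derivWithin y (Set.Ici 0) t} < ⊤ →
      (∀ s, 0 ≤ s → baPhi lam s ≤ ψ s) →
      derivWithin x (Set.Ici 0) 0 ≤ derivWithin y (Set.Ici 0) 0) ∧
    (exitInf {t : ℝ | 0 < t ∧ derivWithin y (Set.Ici 0) t = baPhi lam (y t)}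
        < exitInf {t : ℝ | 0 ≤ t ∧ ¬(0 ≤ y t ∧ 0 ≤ derivWithin y (Set.Ici 0) t)} →
      exitInf {t : ℝ | 0 < t ∧ derivWithin y (Set.Ici 0) t = baPhi lam (y t)} < ⊤ →
      (∀ s, 0 ≤ s → ψ s ≤ baPhi lam s) →
      derivWithin y (Set.Ici 0) 0 ≤ derivWithin x (Set.Ici 0) 0) := by
  obtain ⟨F, hF, hF0⟩ := hx.exists_phaseCurve hlam
  have hy := IsODESolution.of_contDiffOn (ψ := ψ) hyreg hyode
  set y' := derivWithin y (Ici 0)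
  have hquad : ∀ {r}, (∀ t ∈ Icc 0 r, t ∉ {t : ℝ | 0 ≤ t ∧ ¬(0 ≤ y t ∧ 0 ≤ y' t)}) →
      ∀ t ∈ Icc 0 r, 0 ≤ y t ∧ 0 ≤ y' t :=
    fun h t ht => not_not.1 fun hq => h t ht ⟨ht.1, hq⟩
  refine ⟨fun hlt hfin hψ => ?_, fun hlt hfin hψ => ?_⟩
  · obtain ⟨r, ⟨-, hr_lam⟩, hr, hr_exit⟩ := exists_mem_forall_Icc_notMem_of_exitInf_lt
      (C := Ici 0 ∩ y' ⁻¹' Ici lam) (fun t ht => ht.1) (fun t ht => ⟨ht.1, ht.2⟩)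
      (hy.continuousOn_deriv.preimage_isClosed_of_isClosed isClosed_Ici isClosed_Ici) hfin hlt
    have hr_quad := hquad hr_exit r ⟨hr, le_rfl⟩
    by_contra! h
    have hbelow := hy.lt_phaseCurve hF hlam.le hψ hy0 hy'0 (by rwa [hF0])
      (fun t ht => (hquad hr_exit t ht).2) r ⟨hr, le_rfl⟩
    linarith [hF.lt_lam _ hr_quad.1, show lam ≤ y' r from hr_lam]
  · obtain ⟨r, ⟨-, hr_eq⟩, hr, hr_exit⟩ := exists_mem_forall_Icc_notMem_of_exitInf_lt
      (C := Ici 0 ∩ (fun t => y' t - baPhi lam (y t)) ⁻¹' {0}) (fun t ht => mem_Ici.2 ht.1.le)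
      (fun t ht => ⟨mem_Ici.2 ht.1.le, sub_eq_zero.2 ht.2⟩)
      ((hy.continuousOn_deriv.sub ((continuous_baPhi lam).comp_continuousOn hy.continuousOn)
        ).preimage_isClosed_of_isClosed isClosed_Ici isClosed_singleton) hfin hlt
    have hr_quad := hquad hr_exit r ⟨hr, le_rfl⟩
    by_contra! h
    have habove := hy.phaseCurve_lt hF hlam.le hψ hy0 hy'0 (by rwa [hF0])
      (fun t ht => (hquad hr_exit t ht).2) r ⟨hr, le_rfl⟩
    linarith [hF.baPhi_lt _ hr_quad.1, show y' r = baPhi lam (y r) from sub_eq_zero.1 hr_eq]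

/-- comparison of the BA fixed point with solutions of
y'' − y' + ψ(y) = 0 started at y(0) = 0, y'(0) > 0. -/
theorem ba_comparison {lam : ℝ} (hlam : 0 < lam) {x : ℝ → ℝ}
    (hx : IsBAFixedPoint lam x)
    (ψ : ℝ → ℝ) (hψ0 : ψ 0 = 0) (hψnonneg : ∀ s, 0 ≤ s → 0 ≤ ψ s)
    (hψmono : StrictMonoOn ψ (Set.Ici 0))
    (hψlip : ∃ K : NNReal, LipschitzOnWith K ψ (Set.Ici 0))
    (y : ℝ → ℝ) (hyreg : ContDiffOn ℝ 2 y (Set.Ici 0))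
    (hyode : ∀ t, 0 ≤ t →
      derivWithin (derivWithin y (Set.Ici 0)) (Set.Ici 0) t
        - derivWithin y (Set.Ici 0) t + ψ (y t) = 0)
    (hy0 : y 0 = 0) (hy'0 : 0 < derivWithin y (Set.Ici 0) 0) :
    (exitInf {t : ℝ | 0 ≤ t ∧ lam ≤ derivWithin y (Set.Ici 0) t}
        < exitInf {t : ℝ | 0 ≤ t ∧ ¬(0 ≤ y t ∧ 0 ≤ derivWithin y (Set.Ici 0) t)} →
      exitInf {t : ℝ | 0 ≤ t ∧ lam ≤ derivWithin y (Set.Ici 0) t} < ⊤ →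
      (∀ s, 0 ≤ s → baPhi lam s ≤ ψ s) →
      derivWithin x (Set.Ici 0) 0 ≤ derivWithin y (Set.Ici 0) 0) ∧
    (exitInf {t : ℝ | 0 < t ∧ derivWithin y (Set.Ici 0) t = baPhi lam (y t)}
        < exitInf {t : ℝ | 0 ≤ t ∧ ¬(0 ≤ y t ∧ 0 ≤ derivWithin y (Set.Ici 0) t)} →
      exitInf {t : ℝ | 0 < t ∧ derivWithin y (Set.Ici 0) t = baPhi lam (y t)} < ⊤ →
      (∀ s, 0 ≤ s → ψ s ≤ baPhi lam s) →
      derivWithin y (Set.Ici 0) 0 ≤ derivWithin x (Set.Ici 0) 0) :=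
  ba_comparison_general hlam hx ψ y hyreg hyode hy0 hy'0
end

section
/- There exists a constant c₀ > 0 such that for every λ with λ₁ < λ < 1 and every CE fixed point x, one has x'(0) ≥ −c₀ · e^{−π(1−λ)/(2ω)}, where ω = (1/2)√(−λ² + 2(2d−1)λ − 1). -/
/-!
Write `v = 1 - x` and `w = -x'`. Differentiating the fixed-point equation gives
`w' = (1 - λ) w - λ (x - ψ(x))`, and the tangent line `ψ(x) ≥ 1 - d (1 - x)` turns this into
`v'' - 2α v' + (α² + ω²) v ≥ 0` with `α = (1 - λ) / 2`, since `α² + ω² = λ (d - 1)`.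
Sturm comparison with the solution `e^{αt} sin(ωt)` of the corresponding equation gives
`-x'(0) e^{αT} sin(ωT) ≤ ω v(T) ≤ ω` for `0 < T < π / ω`, and `T = π / ω - 1 / α` yields
`-x'(0) ≤ e² e^{-πα/ω}`.
-/

open MeasureTheory

/-- Generating function ψ(x) = Σ_{k≥0} P(k) x^k. -/
noncomputable def genFun (P : ℕ → ℝ) (x : ℝ) : ℝ := ∑' k : ℕ, P k * x ^ k

/-- Context: P is a probability distribution on ℕ with mean d ∈ (1,∞), and ρ ∈ [0,1)
is the smallest fixed point of its generating function on [0,1]. -/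
structure CEContext (P : ℕ → ℝ) (d ρ : ℝ) : Prop where
  P_nonneg : ∀ k, 0 ≤ P k
  P_sum_one : ∑' k : ℕ, P k = 1
  mean_summable : Summable (fun k : ℕ => (k : ℝ) * P k)
  mean_eq : ∑' k : ℕ, (k : ℝ) * P k = d
  d_gt_one : 1 < d
  rho_nonneg : 0 ≤ ρ
  rho_lt_one : ρ < 1
  rho_fixed : genFun P ρ = ρ
  rho_least : ∀ y : ℝ, 0 ≤ y → y ≤ 1 → genFun P y = y → ρ ≤ y

/-- A CE fixed point for infection rate λ ∈ (0,1): x : [0,∞) → [0,1] non-increasing,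
x(0) = 1, x(t) → ρ, and
x(t) = e^{−λt} + λ e^{−λt} ∫₀ᵗ e^{(λ+1)u} (∫_u^∞ ψ(x(s)) e^{−s} ds) du. -/
def IsCEFixedPoint (P : ℕ → ℝ) (ρ lam : ℝ) (x : ℝ → ℝ) : Prop :=
  (∀ t, 0 ≤ t → x t ∈ Set.Icc (0 : ℝ) 1) ∧
  AntitoneOn x (Set.Ici 0) ∧
  x 0 = 1 ∧
  Filter.Tendsto x Filter.atTop (nhds ρ) ∧
  (∀ t, 0 ≤ t →
    x t = Real.exp (-(lam * t)) + lam * Real.exp (-(lam * t)) *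
      ∫ u in (0:ℝ)..t, Real.exp ((lam + 1) * u) *
        ∫ s in Set.Ioi u, genFun P (x s) * Real.exp (-s))

open Real Set Filter Topology

section GenFun

variable {P : ℕ → ℝ}

theorem summable_genFun (hP : ∀ k, 0 ≤ P k) (hPs : Summable P) {y : ℝ} (hy0 : 0 ≤ y)
    (hy1 : y ≤ 1) : Summable fun k => P k * y ^ k :=
  hPs.of_nonneg_of_le (fun k => mul_nonneg (hP k) (pow_nonneg hy0 k))
    fun k => mul_le_of_le_one_right (hP k) (pow_le_one₀ hy0 hy1)

theorem genFun_nonneg (hP : ∀ k, 0 ≤ P k) {y : ℝ} (hy0 : 0 ≤ y) : 0 ≤ genFun P y :=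
  tsum_nonneg fun k => mul_nonneg (hP k) (pow_nonneg hy0 k)

theorem genFun_le_genFun (hP : ∀ k, 0 ≤ P k) (hPs : Summable P) {y z : ℝ} (hy0 : 0 ≤ y)
    (hyz : y ≤ z) (hz1 : z ≤ 1) : genFun P y ≤ genFun P z :=
  (summable_genFun hP hPs hy0 (hyz.trans hz1)).tsum_le_tsum
    (fun k => mul_le_mul_of_nonneg_left (pow_le_pow_left₀ hy0 hyz k) (hP k))
    (summable_genFun hP hPs (hy0.trans hyz) hz1)

theorem genFun_mem_Icc (hP : ∀ k, 0 ≤ P k) (hP1 : HasSum P 1) {y : ℝ} (hy : y ∈ Icc 0 1) :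
    genFun P y ∈ Icc 0 1 := by
  refine ⟨genFun_nonneg hP hy.1, ?_⟩
  calc genFun P y ≤ genFun P 1 := genFun_le_genFun hP hP1.summable hy.1 hy.2 le_rfl
    _ = 1 := by simpa [genFun] using hP1.tsum_eq

theorem continuousOn_genFun (hP : ∀ k, 0 ≤ P k) (hPs : Summable P) :
    ContinuousOn (genFun P) (Icc 0 1) := by
  refine continuousOn_tsum (fun k => continuousOn_const.mul (continuousOn_pow k)) hPs
    fun k y hy => ?_
  rw [norm_mul, Real.norm_of_nonneg (hP k), norm_pow, Real.norm_of_nonneg hy.1]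
  exact mul_le_of_le_one_right (hP k) (pow_le_one₀ hy.1 hy.2)

theorem one_add_mul_sub_one_le_genFun (hP : ∀ k, 0 ≤ P k) (hP1 : HasSum P 1) {d : ℝ}
    (hd : HasSum (fun k : ℕ => (k : ℝ) * P k) d) {y : ℝ} (hy0 : 0 ≤ y) (hy1 : y ≤ 1) :
    1 + (y - 1) * d ≤ genFun P y := by
  refine hasSum_le (fun k => ?_) (hP1.add (hd.mul_left (y - 1)))
    (summable_genFun hP hP1.summable hy0 hy1).hasSum
  have hbern : 1 + (k : ℝ) * (y - 1) ≤ y ^ k := by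
    simpa using one_add_mul_le_pow (by linarith : (-2 : ℝ) ≤ y - 1) k
  nlinarith [hP k]

end GenFun

theorem CEContext.hasSum_one {P : ℕ → ℝ} {d ρ : ℝ} (hctx : CEContext P d ρ) : HasSum P 1 := by
  have hPs : Summable P := by
    by_contra hPs
    simpa [tsum_eq_zero_of_not_summable hPs] using hctx.P_sum_one
  exact hctx.P_sum_one ▸ hPs.hasSum

theorem CEContext.hasSum_mean {P : ℕ → ℝ} {d ρ : ℝ} (hctx : CEContext P d ρ) :
    HasSum (fun k : ℕ => (k : ℝ) * P k) d :=
  hctx.mean_eq ▸ hctx.mean_summable.hasSum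

theorem pos_and_quadratic_pos {d lam : ℝ} (hd : 1 < d)
    (hlam₁ : 2 * d - 1 - 2 * √(d * (d - 1)) < lam) (hlam1 : lam < 1) :
    0 < lam ∧ 0 < -lam ^ 2 + 2 * (2 * d - 1) * lam - 1 := by
  have hsq : √(d * (d - 1)) ^ 2 = d * (d - 1) := sq_sqrt (by nlinarith)
  have hsqrt_nonneg := sqrt_nonneg (d * (d - 1))
  constructor <;> nlinarith

section TailIntegral

variable {f : ℝ → ℝ}

theorem integral_Ioi_eq_sub_intervalIntegral (hf : ∀ a, IntegrableOn f (Ioi a)) (u : ℝ) :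
    ∫ s in Ioi u, f s = (∫ s in Ioi 0, f s) - ∫ s in (0 : ℝ)..u, f s := by
  rw [← intervalIntegral.integral_Ioi_sub_Ioi' (hf 0) (hf u)]
  ring

theorem continuous_integral_Ioi (hf : ∀ a, IntegrableOn f (Ioi a)) :
    Continuous fun u => ∫ s in Ioi u, f s := by
  have hii : ∀ a b, IntervalIntegrable f volume a b := fun a b =>
    intervalIntegrable_iff.2 ((hf (min a b)).mono_set Ioc_subset_Ioi_self)
  rw [funext (integral_Ioi_eq_sub_intervalIntegral hf)]
  exact continuous_const.sub (intervalIntegral.continuous_primitive hii 0)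

theorem hasDerivAt_integral_Ioi (hf : ∀ a, IntegrableOn f (Ioi a)) (hc : Continuous f) (u : ℝ) :
    HasDerivAt (fun u => ∫ s in Ioi u, f s) (-f u) u := by
  rw [funext (integral_Ioi_eq_sub_intervalIntegral hf)]
  exact (hc.integral_hasStrictDerivAt 0 u).hasDerivAt.const_sub (∫ s in Ioi 0, f s)

end TailIntegral

theorem wronskian_nonneg_of_hasDerivAt {v w w' V W : ℝ → ℝ} {b c T : ℝ}
    (hv : ∀ t, HasDerivAt v (w t) t) (hw : ∀ t, HasDerivAt w (w' t) t)
    (hV : ∀ t, HasDerivAt V (W t) t) (hW : ∀ t, HasDerivAt W (b * W t - c * V t) t)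
    (hv0 : v 0 = 0) (hV0 : V 0 = 0) (hVnn : ∀ t ∈ Icc 0 T, 0 ≤ V t)
    (hineq : ∀ t ∈ Icc 0 T, b * w t - c * v t ≤ w' t) :
    ∀ t ∈ Icc 0 T, 0 ≤ w t * V t - v t * W t := by
  set Φ := fun t => exp (-(b * t)) * (w t * V t - v t * W t)
  have hΦ : ∀ t, HasDerivAt Φ (exp (-(b * t)) * (V t * (w' t - (b * w t - c * v t)))) t := by
    intro t
    refine ((((hasDerivAt_id' t).const_mul b).neg.exp).mul
      (((hw t).mul (hV t)).sub ((hv t).mul (hW t)))).congr_deriv ?_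
    simp only [Pi.neg_apply, Pi.sub_apply, Pi.mul_apply]
    ring
  have hmono : MonotoneOn Φ (Icc 0 T) := by
    refine monotoneOn_of_deriv_nonneg (convex_Icc 0 T)
      (HasDerivAt.continuousOn fun t _ => hΦ t)
      (fun t _ => (hΦ t).differentiableAt.differentiableWithinAt) fun t ht => ?_
    have ht := interior_subset ht
    rw [(hΦ t).deriv]
    exact mul_nonneg (exp_pos _).le (mul_nonneg (hVnn t ht) (sub_nonneg.2 (hineq t ht)))
  intro t ht
  have hΦt : Φ 0 ≤ Φ t := hmono ⟨le_rfl, ht.1.trans ht.2⟩ ht ht.1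
  simp only [Φ, hv0, hV0] at hΦt
  simpa [exp_pos] using hΦt

/-- Sturm comparison: by the Wronskian bound, `v / V` is monotone on `(0, T]`, and it tends to
`w 0 / W 0` at `0⁺`. -/
theorem sturm_comparison {v w w' V W : ℝ → ℝ} {b c T : ℝ}
    (hv : ∀ t, HasDerivAt v (w t) t) (hw : ∀ t, HasDerivAt w (w' t) t)
    (hV : ∀ t, HasDerivAt V (W t) t) (hW : ∀ t, HasDerivAt W (b * W t - c * V t) t)
    (hv0 : v 0 = 0) (hV0 : V 0 = 0) (hW0 : 0 < W 0) (hT : 0 < T)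
    (hVpos : ∀ t ∈ Ioc 0 T, 0 < V t) (hineq : ∀ t ∈ Icc 0 T, b * w t - c * v t ≤ w' t) :
    w 0 * V T ≤ v T * W 0 := by
  have hVnn : ∀ t ∈ Icc 0 T, 0 ≤ V t := fun t ht =>
    ht.1.eq_or_lt.elim (fun h => h ▸ hV0.ge) fun h => (hVpos t ⟨h, ht.2⟩).le
  have hWr := wronskian_nonneg_of_hasDerivAt hv hw hV hW hv0 hV0 hVnn hineq
  have hmono : MonotoneOn (v / V) (Ioc 0 T) := by
    refine monotoneOn_of_deriv_nonneg (convex_Ioc 0 T)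
      (fun t ht => ((hv t).div (hV t) (hVpos t ht).ne').continuousAt.continuousWithinAt)
      (fun t ht => ?_) fun t ht => ?_ <;> rw [interior_Ioc] at ht
    · exact ((hv t).div (hV t) (hVpos t ⟨ht.1, ht.2.le⟩).ne').differentiableAt
        |>.differentiableWithinAt
    · rw [((hv t).div (hV t) (hVpos t ⟨ht.1, ht.2.le⟩).ne').deriv]
      exact div_nonneg (hWr t ⟨ht.1.le, ht.2.le⟩) (sq_nonneg _)
  have hlim : Tendsto (fun t => v t / V t) (𝓝[>] 0) (𝓝 (w 0 / W 0)) := by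
    refine ((hv 0).tendsto_slope_zero_right.div (hV 0).tendsto_slope_zero_right
      hW0.ne').congr' ?_
    filter_upwards [self_mem_nhdsWithin] with t (ht : 0 < t)
    simp only [zero_add, hv0, hV0, sub_zero, smul_eq_mul]
    exact mul_div_mul_left _ _ (inv_ne_zero ht.ne')
  have hle : w 0 / W 0 ≤ v T / V T := by
    refine le_of_tendsto hlim ?_
    filter_upwards [Ioc_mem_nhdsGT hT] with t ht
    exact hmono ht (right_mem_Ioc.2 hT) ht.2
  rwa [div_le_div_iff₀ hW0 (hVpos T (right_mem_Ioc.2 hT))] at hle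

theorem hasDerivAt_exp_mul_sin (α ω t : ℝ) :
    HasDerivAt (fun t => exp (α * t) * sin (ω * t))
      (exp (α * t) * (α * sin (ω * t) + ω * cos (ω * t))) t := by
  refine ((((hasDerivAt_id' t).const_mul α).exp).mul
    ((hasDerivAt_id' t).const_mul ω).sin).congr_deriv ?_
  ring

theorem hasDerivAt_exp_mul_sin_deriv (α ω t : ℝ) :
    HasDerivAt (fun t => exp (α * t) * (α * sin (ω * t) + ω * cos (ω * t)))
      (2 * α * (exp (α * t) * (α * sin (ω * t) + ω * cos (ω * t))) -
        (α ^ 2 + ω ^ 2) * (exp (α * t) * sin (ω * t))) t := by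
  have hωt := (hasDerivAt_id' t).const_mul ω
  refine ((((hasDerivAt_id' t).const_mul α).exp).mul
    ((hωt.sin.const_mul α).add (hωt.cos.const_mul ω))).congr_deriv ?_
  simp only [Pi.add_apply]
  ring

theorem sturm_comparison_exp_mul_sin {v w w' : ℝ → ℝ} {α ω T : ℝ} (hω : 0 < ω) (hT : 0 < T)
    (hTπ : ω * T < π) (hv : ∀ t, HasDerivAt v (w t) t) (hw : ∀ t, HasDerivAt w (w' t) t)
    (hv0 : v 0 = 0) (hineq : ∀ t ∈ Icc 0 T, 2 * α * w t - (α ^ 2 + ω ^ 2) * v t ≤ w' t) :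
    w 0 * (exp (α * T) * sin (ω * T)) ≤ v T * ω := by
  have hVpos : ∀ t ∈ Ioc 0 T, 0 < exp (α * t) * sin (ω * t) := fun t ht =>
    mul_pos (exp_pos _) (sin_pos_of_pos_of_lt_pi (mul_pos hω ht.1)
      ((mul_le_mul_of_nonneg_left ht.2 hω.le).trans_lt hTπ))
  simpa using sturm_comparison hv hw (hasDerivAt_exp_mul_sin α ω)
    (hasDerivAt_exp_mul_sin_deriv α ω) hv0 (by simp) (by simpa using hω) hT hVpos hineq

theorem le_exp_two_mul_exp_of_forall_mul_exp_mul_sin_le {a α ω : ℝ} (hα : 0 < α)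
    (hα' : α ≤ 1 / 2) (hω : 0 < ω) (ha : a ≤ 1)
    (h : ∀ T, 0 < T → ω * T < π → a * (exp (α * T) * sin (ω * T)) ≤ ω) :
    a ≤ exp 2 * exp (-(π * α / ω)) := by
  rcases le_or_gt (π * α) (2 * ω) with hcase | hcase
  · calc a ≤ 1 := ha
      _ = exp 2 * exp (-2) := by rw [← exp_add]; norm_num
      _ ≤ exp 2 * exp (-(π * α / ω)) := by
        gcongr
        rw [div_le_iff₀ hω]
        linarith
  rcases le_or_gt a 0 with ha0 | ha0
  · exact ha0.trans (by positivity)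
  -- at `T = π / ω - 1 / α` the damping is `e^{πα/ω - 1}` and the sine is `sin (ω / α) ≥ 2ω / (πα)`
  have hr : 0 < ω / α := div_pos hω hα
  have hr' : ω / α ≤ π / 2 := by rw [div_le_div_iff₀ hα two_pos]; linarith
  have hT : 0 < π / ω - 1 / α := by
    rw [sub_pos, div_lt_div_iff₀ hα hω]
    linarith
  have hωT : ω * (π / ω - 1 / α) = π - ω / α := by field_simp
  have hαT : α * (π / ω - 1 / α) = π * α / ω - 1 := by field_simp
  have key := h _ hT (by rw [hωT]; linarith)
  rw [hωT, hαT, sin_pi_sub] at key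
  have hsin : 2 / π * (ω / α) ≤ sin (ω / α) := mul_le_sin hr.le hr'
  have hpi : π * α ≤ 2 := by nlinarith [pi_le_four]
  have hdamp : a * exp (π * α / ω - 1) * (2 * ω) ≤ ω * 2 :=
    calc a * exp (π * α / ω - 1) * (2 * ω)
        = a * (exp (π * α / ω - 1) * (2 / π * (ω / α))) * (π * α) := by field_simp
      _ ≤ a * (exp (π * α / ω - 1) * sin (ω / α)) * (π * α) := by gcongr
      _ ≤ ω * (π * α) := by gcongr
      _ ≤ ω * 2 := by gcongr
  have hle : a * exp (π * α / ω - 1) ≤ 1 := by nlinarith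
  rw [exp_neg, ← div_eq_mul_inv, le_div_iff₀ (exp_pos _)]
  calc a * exp (π * α / ω) = a * exp (π * α / ω - 1) * exp 1 := by
        rw [mul_assoc, ← exp_add, sub_add_cancel]
    _ ≤ 1 * exp 1 := by gcongr
    _ ≤ exp 2 := by rw [one_mul]; exact exp_le_exp.2 one_le_two

section CEFixedPoint

variable {P : ℕ → ℝ} {ρ lam : ℝ} {x : ℝ → ℝ}

/- `x` is extended to `t < 0` by `x (max t 0)`, so that `ceSol`, the right-hand side of the
fixed-point equation, and `ceRate = -ceSol'` are differentiable on all of `ℝ`. -/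

noncomputable def ceIntegrand (P : ℕ → ℝ) (x : ℝ → ℝ) (s : ℝ) : ℝ :=
  genFun P (x (max s 0)) * exp (-s)

noncomputable def ceTail (P : ℕ → ℝ) (x : ℝ → ℝ) (u : ℝ) : ℝ := ∫ s in Ioi u, ceIntegrand P x s

noncomputable def ceSol (P : ℕ → ℝ) (lam : ℝ) (x : ℝ → ℝ) (t : ℝ) : ℝ :=
  exp (-(lam * t)) + lam * exp (-(lam * t)) * ∫ u in (0 : ℝ)..t, exp ((lam + 1) * u) * ceTail P x u

noncomputable def ceRate (P : ℕ → ℝ) (lam : ℝ) (x : ℝ → ℝ) (t : ℝ) : ℝ :=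
  lam * (ceSol P lam x t - exp t * ceTail P x t)

namespace IsCEFixedPoint

theorem mem_Icc_max (hx : IsCEFixedPoint P ρ lam x) (t : ℝ) : x (max t 0) ∈ Icc 0 1 :=
  hx.1 _ (le_max_right t 0)

theorem antitone_ceIntegrand (hx : IsCEFixedPoint P ρ lam x) (hP : ∀ k, 0 ≤ P k)
    (hP1 : HasSum P 1) : Antitone (ceIntegrand P x) := by
  intro s t hst
  have hxst : x (max t 0) ≤ x (max s 0) :=
    hx.2.1 (le_max_right s 0) (le_max_right t 0) (max_le_max_right 0 hst)
  exact mul_le_mul (genFun_le_genFun hP hP1.summable (hx.mem_Icc_max t).1 hxst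
    (hx.mem_Icc_max s).2) (exp_le_exp.2 (neg_le_neg hst)) (exp_pos _).le
    (genFun_mem_Icc hP hP1 (hx.mem_Icc_max s)).1

theorem ceIntegrand_mem_Icc (hx : IsCEFixedPoint P ρ lam x) (hP : ∀ k, 0 ≤ P k)
    (hP1 : HasSum P 1) (s : ℝ) : ceIntegrand P x s ∈ Icc 0 (exp (-s)) := by
  have hψ := genFun_mem_Icc hP hP1 (hx.mem_Icc_max s)
  exact ⟨mul_nonneg hψ.1 (exp_pos _).le, mul_le_of_le_one_left (exp_pos _).le hψ.2⟩

theorem integrableOn_ceIntegrand (hx : IsCEFixedPoint P ρ lam x) (hP : ∀ k, 0 ≤ P k)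
    (hP1 : HasSum P 1) (u : ℝ) : IntegrableOn (ceIntegrand P x) (Ioi u) := by
  refine (exp_neg_integrableOn_Ioi u one_pos).mono'
    (hx.antitone_ceIntegrand hP hP1).measurable.aestronglyMeasurable.restrict
    (Eventually.of_forall fun s => ?_)
  have hs := hx.ceIntegrand_mem_Icc hP hP1 s
  simpa [Real.norm_of_nonneg hs.1] using hs.2

theorem hasDerivAt_ceSol (hx : IsCEFixedPoint P ρ lam x) (hP : ∀ k, 0 ≤ P k)
    (hP1 : HasSum P 1) (t : ℝ) : HasDerivAt (ceSol P lam x) (-ceRate P lam x t) t := by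
  have hE : HasDerivAt (fun t => exp (-(lam * t))) (-lam * exp (-(lam * t))) t := by
    simpa [mul_comm] using ((hasDerivAt_id' t).const_mul lam).neg.exp
  have hTail : Continuous (ceTail P x) :=
    continuous_integral_Ioi (hx.integrableOn_ceIntegrand hP hP1)
  have hH : HasDerivAt (fun t => ∫ u in (0 : ℝ)..t, exp ((lam + 1) * u) * ceTail P x u)
      (exp ((lam + 1) * t) * ceTail P x t) t :=
    (((continuous_const.mul continuous_id).rexp.mul hTail).integral_hasStrictDerivAt
      0 t).hasDerivAt
  have hexp : exp (-(lam * t)) * exp ((lam + 1) * t) = exp t := by rw [← exp_add]; ring_nf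
  refine (hE.add ((hE.const_mul lam).mul hH)).congr_deriv ?_
  simp only [ceRate, ceSol]
  linear_combination (lam * ceTail P x t) * hexp

theorem eq_ceSol (hx : IsCEFixedPoint P ρ lam x) {t : ℝ} (ht : 0 ≤ t) :
    x t = ceSol P lam x t := by
  rw [hx.2.2.2.2 t ht, ceSol]
  congr 2
  refine intervalIntegral.integral_congr fun u hu => ?_
  rw [uIcc_of_le ht] at hu
  refine congrArg _ (setIntegral_congr_fun measurableSet_Ioi fun s hs => ?_)
  simp only [ceIntegrand, max_eq_left (hu.1.trans (le_of_lt hs))]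

theorem continuous_ceIntegrand (hx : IsCEFixedPoint P ρ lam x) (hP : ∀ k, 0 ≤ P k)
    (hP1 : HasSum P 1) : Continuous (ceIntegrand P x) := by
  have hsol : Continuous (ceSol P lam x) :=
    continuous_iff_continuousAt.2 fun t => (hx.hasDerivAt_ceSol hP hP1 t).continuousAt
  have hxmax : (fun s => x (max s 0)) = fun s => ceSol P lam x (max s 0) :=
    funext fun s => hx.eq_ceSol (le_max_right s 0)
  refine Continuous.mul ?_ continuous_neg.rexp
  exact (continuousOn_genFun hP hP1.summable).comp_continuous
    (hxmax ▸ hsol.comp (continuous_id.max continuous_const)) hx.mem_Icc_max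

theorem hasDerivAt_ceRate (hx : IsCEFixedPoint P ρ lam x) (hP : ∀ k, 0 ≤ P k)
    (hP1 : HasSum P 1) (t : ℝ) :
    HasDerivAt (ceRate P lam x)
      ((1 - lam) * ceRate P lam x t - lam * (ceSol P lam x t - genFun P (x (max t 0)))) t := by
  have hTail := hasDerivAt_integral_Ioi (hx.integrableOn_ceIntegrand hP hP1)
    (hx.continuous_ceIntegrand hP hP1) t
  have hexp : exp t * ceIntegrand P x t = genFun P (x (max t 0)) := by
    rw [ceIntegrand, mul_left_comm, ← exp_add, add_neg_cancel, exp_zero, mul_one]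
  refine (((hx.hasDerivAt_ceSol hP hP1 t).sub ((hasDerivAt_exp t).mul hTail)).const_mul
    lam).congr_deriv ?_
  simp only [ceRate, ceTail]
  linear_combination lam * hexp

theorem ceSol_sub_genFun_le (hx : IsCEFixedPoint P ρ lam x) (hP : ∀ k, 0 ≤ P k)
    (hP1 : HasSum P 1) {d : ℝ} (hd : HasSum (fun k : ℕ => (k : ℝ) * P k) d) {t : ℝ}
    (ht : 0 ≤ t) : ceSol P lam x t - genFun P (x (max t 0)) ≤ (d - 1) * (1 - ceSol P lam x t) := by
  have hxt := hx.1 t ht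
  have htan := one_add_mul_sub_one_le_genFun hP hP1 hd hxt.1 hxt.2
  rw [max_eq_left ht, ← hx.eq_ceSol ht]
  linarith

theorem ceRate_zero_le (hx : IsCEFixedPoint P ρ lam x) (hP : ∀ k, 0 ≤ P k) (hP1 : HasSum P 1)
    (hlam : 0 ≤ lam) : ceRate P lam x 0 ≤ lam := by
  have htail : 0 ≤ ceTail P x 0 :=
    setIntegral_nonneg measurableSet_Ioi fun s _ => (hx.ceIntegrand_mem_Icc hP hP1 s).1
  have hsol : ceSol P lam x 0 = 1 := by simp [ceSol]
  rw [ceRate, hsol, exp_zero, one_mul]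
  nlinarith

theorem derivWithin_zero (hx : IsCEFixedPoint P ρ lam x) (hP : ∀ k, 0 ≤ P k)
    (hP1 : HasSum P 1) : derivWithin x (Ici 0) 0 = -ceRate P lam x 0 := by
  have hEqOn : EqOn x (ceSol P lam x) (Ici 0) := fun t ht => hx.eq_ceSol ht
  rw [derivWithin_congr hEqOn (hx.eq_ceSol le_rfl)]
  exact (hx.hasDerivAt_ceSol hP hP1 0).hasDerivWithinAt.derivWithin
    (uniqueDiffOn_Ici 0 0 self_mem_Ici)

theorem ceRate_zero_mul_exp_mul_sin_le (hx : IsCEFixedPoint P ρ lam x) (hP : ∀ k, 0 ≤ P k)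
    (hP1 : HasSum P 1) {d : ℝ} (hd : HasSum (fun k : ℕ => (k : ℝ) * P k) d) (hlam : 0 ≤ lam)
    {ω T : ℝ} (hω : 0 < ω) (hT : 0 < T) (hTπ : ω * T < π)
    (hαω : ((1 - lam) / 2) ^ 2 + ω ^ 2 = lam * (d - 1)) :
    ceRate P lam x 0 * (exp ((1 - lam) / 2 * T) * sin (ω * T)) ≤ ω := by
  have hcomp := sturm_comparison_exp_mul_sin hω hT hTπ
    (fun t => by simpa using (hx.hasDerivAt_ceSol hP hP1 t).const_sub 1)
    (hx.hasDerivAt_ceRate hP hP1) (by simp [ceSol]) fun t ht => by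
      have h := mul_le_mul_of_nonneg_left (hx.ceSol_sub_genFun_le hP hP1 hd ht.1) hlam
      rw [hαω]
      linarith
  have hsol := (hx.1 T hT.le).1
  rw [hx.eq_ceSol hT.le] at hsol
  nlinarith

end IsCEFixedPoint

end CEFixedPoint

/-- there is c₀ > 0 such that for all λ ∈ (λ₁, 1) and any CE fixed
point x, x'(0) ≥ −c₀ e^{−π(1−λ)/(2ω)} where ω = (1/2)√(−λ² + 2(2d−1)λ − 1). -/
theorem ce_xprime_lower_bound {P : ℕ → ℝ} {d ρ : ℝ} (hctx : CEContext P d ρ) :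
    ∃ c₀ : ℝ, 0 < c₀ ∧
      ∀ lam : ℝ, 2 * d - 1 - 2 * Real.sqrt (d * (d - 1)) < lam → lam < 1 →
        ∀ x : ℝ → ℝ, IsCEFixedPoint P ρ lam x →
          -(c₀ * Real.exp (-(Real.pi * (1 - lam) /
              (2 * ((1 / 2) * Real.sqrt (-lam ^ 2 + 2 * (2 * d - 1) * lam - 1))))))
            ≤ derivWithin x (Set.Ici 0) 0 := by
  have hP := hctx.P_nonneg
  have hP1 := hctx.hasSum_one
  refine ⟨exp 2, exp_pos 2, fun lam hlam₁ hlam1 x hx => ?_⟩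
  obtain ⟨hlam, hq⟩ := pos_and_quadratic_pos hctx.d_gt_one hlam₁ hlam1
  set ω := 1 / 2 * √(-lam ^ 2 + 2 * (2 * d - 1) * lam - 1)
  have hω : 0 < ω := by positivity
  have hαω : ((1 - lam) / 2) ^ 2 + ω ^ 2 = lam * (d - 1) := by
    rw [mul_pow, sq_sqrt hq.le]
    ring
  rw [hx.derivWithin_zero hP hP1, show π * (1 - lam) / (2 * ω) = π * ((1 - lam) / 2) / ω by ring,
    neg_le_neg_iff]
  exact le_exp_two_mul_exp_of_forall_mul_exp_mul_sin_le (by linarith) (by linarith) hω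
    ((hx.ceRate_zero_le hP hP1 hlam.le).trans hlam1.le) fun T hT hTπ =>
      hx.ceRate_zero_mul_exp_mul_sin_le hP hP1 hctx.hasSum_mean hlam.le hω hT hTπ hαω
end
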